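/- arXiv:2312.12032 — 2 statements merged into one kernel-verified Lean document; each statement's English description precedes it below -/
import Mathlib

section
/- Let f : ℝⁿ → ℝ be locally Lipschitz, x₀ ∈ ℝⁿ, ε > 0, c ∈ (0,1), W ⊆ ∂_ε f(x₀) nonempty compact, and ṽ := -argmin{‖ξ‖² : ξ ∈ conv(W)} with ṽ ≠ 0. If f(x₀ + (ε/‖ṽ‖) ṽ) > f(x₀) - c ε ‖ṽ‖, then there exist t' ∈ (0, ε/‖ṽ‖) and ξ' ∈ ∂f(x₀ + t' ṽ) with ⟨ξ', ṽ⟩ > -c ‖ṽ‖². In particular, ξ' ∉ conv(W). -/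
open Filter Set Topology RealInnerProductSpace

noncomputable def clarkeDir {E : Type*} [NormedAddCommGroup E] [InnerProductSpace ℝ E]
    (f : E → ℝ) (x v : E) : ℝ :=
  Filter.limsup (fun p : E × ℝ => (f (p.1 + p.2 • v) - f p.1) / p.2)
    ((nhds x) ×ˢ (nhdsWithin 0 (Set.Ioi 0)))

noncomputable def clarkeSubdiff {E : Type*} [NormedAddCommGroup E] [InnerProductSpace ℝ E]
    (f : E → ℝ) (x : E) : Set E :=
  {ξ | ∀ v, ⟪ξ, v⟫ ≤ clarkeDir f x v}

noncomputable def goldsteinSubdiff {E : Type*} [NormedAddCommGroup E] [InnerProductSpace ℝ E]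
    (f : E → ℝ) (ε : ℝ) (x : E) : Set E :=
  convexHull ℝ (⋃ y ∈ Metric.closedBall x ε, clarkeSubdiff f y)

/-!
Write `f°(x; v)` for `clarkeDir f x v`. If `f°(x₀ + t ṽ; ṽ) ≤ -c‖ṽ‖²` held for every
`t ∈ (0, ε/‖ṽ‖)`, then, since `f°(y; ṽ)` dominates the upper right Dini derivative of
`t ↦ f(x₀ + t ṽ)`, a Dini mean value inequality along the segment would give
`f(x₀ + (ε/‖ṽ‖) ṽ) ≤ f(x₀) - c ε ‖ṽ‖`. Hence `f°(x₀ + t' ṽ; ṽ) > -c‖ṽ‖²` for some `t'`.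
The function `f°(x₀ + t' ṽ; ·)` is sublinear and bounded by a multiple of the norm, so by
Hahn–Banach some `ξ' ∈ ∂f(x₀ + t' ṽ)` attains it at `ṽ`. Finally, `-ṽ` being the point of least
norm of `conv W` means `⟪ξ, ṽ⟫ ≤ -‖ṽ‖²` on `conv W`, which excludes `ξ'`.
-/

theorem exists_linearMap_le_apply_eq_of_sublinear {E : Type*} [AddCommGroup E] [Module ℝ E]
    {N : E → ℝ} (N_hom : ∀ c : ℝ, 0 < c → ∀ x, N (c • x) = c * N x)
    (N_add : ∀ x y, N (x + y) ≤ N x + N y) (v : E) :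
    ∃ g : E →ₗ[ℝ] ℝ, (∀ x, g x ≤ N x) ∧ g v = N v := by
  have N_zero : N 0 = 0 := by
    have h := N_hom 2 two_pos 0
    rw [smul_zero] at h
    linarith
  have N_neg : -N (-v) ≤ N v := by
    have h := N_add v (-v)
    rw [add_neg_cancel, N_zero] at h
    linarith
  let g₀ := LinearPMap.mkSpanSingleton' (σ := RingHom.id ℝ) v (N v) fun c hc => by
    rcases smul_eq_zero.1 hc with rfl | rfl
    · exact zero_smul ℝ _
    · rw [N_zero, smul_zero]
  have hg₀ : ∀ x : g₀.domain, g₀ x ≤ N x := by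
    rintro ⟨_, hx⟩
    obtain ⟨a, rfl⟩ := Submodule.mem_span_singleton.1 hx
    rw [LinearPMap.mkSpanSingleton'_apply, RingHom.id_apply, smul_eq_mul]
    change a * N v ≤ N (a • v)
    rcases lt_trichotomy a 0 with ha | rfl | ha
    · rw [← neg_neg a, neg_smul, ← smul_neg, N_hom _ (neg_pos.2 ha)]
      nlinarith
    · rw [zero_smul, zero_mul, N_zero]
    · rw [N_hom a ha]
  obtain ⟨g, hgg₀, hgN⟩ := exists_extension_of_le_sublinear g₀ N N_hom N_add hg₀
  refine ⟨g, hgN, ?_⟩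
  have hv : v ∈ g₀.domain := Submodule.mem_span_singleton_self v
  rw [hgg₀ ⟨v, hv⟩, LinearPMap.mkSpanSingleton'_apply_self]

theorem norm_sq_le_inner_of_forall_norm_le {F : Type*} [NormedAddCommGroup F]
    [InnerProductSpace ℝ F] {C : Set F} (hC : Convex ℝ C) {u : F} (hu : u ∈ C)
    (hmin : ∀ w ∈ C, ‖u‖ ≤ ‖w‖) {w : F} (hw : w ∈ C) : ‖u‖ ^ 2 ≤ ⟪u, w⟫ := by
  have hinf : ‖0 - u‖ = ⨅ w : C, ‖0 - (w : F)‖ := by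
    have : Nonempty C := ⟨⟨u, hu⟩⟩
    refine le_antisymm (le_ciInf fun w => ?_) (ciInf_le ⟨0, ?_⟩ (⟨u, hu⟩ : C))
    · simpa using hmin w w.2
    · rintro _ ⟨w, rfl⟩
      exact norm_nonneg _
  have h := (norm_eq_iInf_iff_real_inner_le_zero hC hu).1 hinf w hw
  rw [zero_sub, inner_neg_left, inner_sub_right, real_inner_self_eq_norm_sq] at h
  linarith

theorem sub_le_mul_sub_of_frequently_slope_lt {g : ℝ → ℝ} {a b M : ℝ} (hab : a < b)
    (hg : ContinuousOn g (Icc a b))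
    (hslope : ∀ y ∈ Ioo a b, ∀ r, M < r → ∃ᶠ z in 𝓝[>] y, slope g y z < r) :
    g b - g a ≤ M * (b - a) := by
  -- The slope bound is only known on `Ioo a b`: estimate on `[δ, b]`, then let `δ → a`.
  have hδ : ∀ δ ∈ Ioo a b, g b ≤ g δ + M * (b - δ) := by
    intro δ hδ
    refine image_le_of_liminf_slope_right_le_deriv_boundary (hg.mono (Icc_subset_Icc_left hδ.1.le))
      (B := fun y => g δ + M * (y - δ)) (B' := fun _ => M) (by simp) (by fun_prop) (fun y _ => ?_)
      (fun y hy => hslope y ⟨hδ.1.trans_le hy.1, hy.2⟩) (right_mem_Icc.2 hδ.2.le)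
    simpa using (((hasDerivWithinAt_id y _).sub_const δ).const_mul M).const_add (g δ)
  have hlim : Tendsto (fun δ => g δ + M * (b - δ)) (𝓝[Ioo a b] a) (𝓝 (g a + M * (b - a))) :=
    ((hg a (left_mem_Icc.2 hab.le)).mono Ioo_subset_Icc_self).add
      (by fun_prop : Continuous fun δ => M * (b - δ)).continuousWithinAt
  have := left_nhdsWithin_Ioo_neBot hab
  have hb := ge_of_tendsto hlim (eventually_nhdsWithin_of_forall hδ)
  linarith

section ClarkeQuotient

variable {E : Type*} [NormedAddCommGroup E]

def clarkeFilter (x : E) : Filter (E × ℝ) :=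
  𝓝 x ×ˢ 𝓝[>] 0

instance clarkeFilter_neBot (x : E) : (clarkeFilter x).NeBot :=
  prod_neBot.2 ⟨inferInstance, inferInstance⟩

theorem tendsto_snd_clarkeFilter (x : E) :
    Tendsto Prod.snd (clarkeFilter x) (𝓝[>] (0 : ℝ)) :=
  tendsto_snd

variable [NormedSpace ℝ E]

noncomputable def clarkeQuotient (f : E → ℝ) (v : E) (p : E × ℝ) : ℝ :=
  (f (p.1 + p.2 • v) - f p.1) / p.2

theorem tendsto_add_smul_clarkeFilter (x v : E) :
    Tendsto (fun p : E × ℝ => p.1 + p.2 • v) (clarkeFilter x) (𝓝 x) := by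
  have h := tendsto_fst.add
    (((tendsto_snd_clarkeFilter x).mono_right nhdsWithin_le_nhds).smul_const v)
  rwa [zero_smul, add_zero] at h

variable {f : E → ℝ}

theorem LocallyLipschitz.exists_eventually_abs_clarkeQuotient_le (hf : LocallyLipschitz f)
    (x : E) : ∃ K : ℝ, ∀ v, ∀ᶠ p in clarkeFilter x, |clarkeQuotient f v p| ≤ K * ‖v‖ := by
  obtain ⟨K, U, hU, hKU⟩ := hf x
  refine ⟨K, fun v => ?_⟩
  filter_upwards [tendsto_add_smul_clarkeFilter x v hU, tendsto_fst hU,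
    tendsto_snd_clarkeFilter x self_mem_nhdsWithin] with p hpv hp (ht : 0 < p.2)
  have h := hKU.dist_le_mul _ hpv _ hp
  rw [Real.dist_eq, dist_eq_norm, add_sub_cancel_left, norm_smul, Real.norm_of_nonneg ht.le] at h
  rw [clarkeQuotient, abs_div, abs_of_pos ht, div_le_iff₀ ht]
  linarith

theorem LocallyLipschitz.isBoundedUnder_le_clarkeQuotient (hf : LocallyLipschitz f) {x : E}
    {l : Filter (E × ℝ)} (hl : l ≤ clarkeFilter x) (v : E) :
    IsBoundedUnder (· ≤ ·) l (clarkeQuotient f v) := by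
  obtain ⟨K, hK⟩ := hf.exists_eventually_abs_clarkeQuotient_le x
  exact ⟨K * ‖v‖, hl ((hK v).mono fun _ hp => le_of_abs_le hp)⟩

theorem LocallyLipschitz.isBoundedUnder_ge_clarkeQuotient (hf : LocallyLipschitz f) {x : E}
    {l : Filter (E × ℝ)} (hl : l ≤ clarkeFilter x) (v : E) :
    IsBoundedUnder (· ≥ ·) l (clarkeQuotient f v) := by
  obtain ⟨K, hK⟩ := hf.exists_eventually_abs_clarkeQuotient_le x
  exact ⟨-(K * ‖v‖), hl ((hK v).mono fun _ hp => neg_le_of_abs_le hp)⟩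

end ClarkeQuotient

section ClarkeDir

variable {E : Type*} [NormedAddCommGroup E] [InnerProductSpace ℝ E] {f : E → ℝ}

theorem clarkeDir_eq_limsup (f : E → ℝ) (x v : E) :
    clarkeDir f x v = limsup (clarkeQuotient f v) (clarkeFilter x) :=
  rfl

theorem LocallyLipschitz.limsup_clarkeQuotient_comp_le (hf : LocallyLipschitz f) {x : E} (v : E)
    {ι : Type*} {l : Filter ι} [l.NeBot] {m : ι → E × ℝ} (hm : Tendsto m l (clarkeFilter x)) :
    limsup (clarkeQuotient f v ∘ m) l ≤ clarkeDir f x v := by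
  rw [limsup_comp, clarkeDir_eq_limsup]
  exact limsup_le_limsup_of_le hm (hf.isBoundedUnder_ge_clarkeQuotient hm v).isCoboundedUnder_le
    (hf.isBoundedUnder_le_clarkeQuotient le_rfl v)

theorem LocallyLipschitz.exists_clarkeDir_le_mul_norm (hf : LocallyLipschitz f) (x : E) :
    ∃ K : ℝ, ∀ v, clarkeDir f x v ≤ K * ‖v‖ := by
  obtain ⟨K, hK⟩ := hf.exists_eventually_abs_clarkeQuotient_le x
  exact ⟨K, fun v => limsup_le_of_le
    (hf.isBoundedUnder_ge_clarkeQuotient le_rfl v).isCoboundedUnder_le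
    ((hK v).mono fun _ hp => le_of_abs_le hp)⟩

theorem clarkeDir_zero_right (f : E → ℝ) (x : E) : clarkeDir f x 0 = 0 := by
  simp [clarkeDir]

theorem LocallyLipschitz.clarkeDir_add_le (hf : LocallyLipschitz f) (x v w : E) :
    clarkeDir f x (v + w) ≤ clarkeDir f x v + clarkeDir f x w := by
  set m : E × ℝ → E × ℝ := fun p => (p.1 + p.2 • w, p.2)
  have hm : Tendsto m (clarkeFilter x) (clarkeFilter x) :=
    (tendsto_add_smul_clarkeFilter x w).prodMk (tendsto_snd_clarkeFilter x)
  have hsplit : clarkeQuotient f (v + w) = clarkeQuotient f v ∘ m + clarkeQuotient f w := by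
    ext p
    simp only [clarkeQuotient, Pi.add_apply, Function.comp_apply, m, ← add_div, smul_add,
      add_assoc, add_comm (p.2 • v)]
    ring_nf
  rw [clarkeDir_eq_limsup, hsplit]
  refine (limsup_add_le ?_ ?_ (hf.isBoundedUnder_ge_clarkeQuotient le_rfl w).isCoboundedUnder_le
    (hf.isBoundedUnder_le_clarkeQuotient le_rfl w)).trans
    (add_le_add_left (hf.limsup_clarkeQuotient_comp_le v hm) _)
  · exact hf.isBoundedUnder_ge_clarkeQuotient hm v
  · exact hf.isBoundedUnder_le_clarkeQuotient hm v

theorem LocallyLipschitz.clarkeDir_smul_le (hf : LocallyLipschitz f) (x v : E) {a : ℝ}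
    (ha : 0 < a) : clarkeDir f x (a • v) ≤ a * clarkeDir f x v := by
  set m : E × ℝ → E × ℝ := fun p => (p.1, a * p.2)
  have hm : Tendsto m (clarkeFilter x) (clarkeFilter x) := by
    have hmul : Tendsto (a * ·) (𝓝[>] (0 : ℝ)) (𝓝[>] 0) :=
      tendsto_comap.mono_left (comap_mulLeft_nhdsGT_zero ha).ge
    exact tendsto_fst.prodMk (hmul.comp (tendsto_snd_clarkeFilter x))
  have hscale : clarkeQuotient f (a • v) = (a * ·) ∘ (clarkeQuotient f v ∘ m) := by
    ext p
    simp only [clarkeQuotient, Function.comp_apply, m, smul_smul, mul_comm p.2 a]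
    field_simp
  rw [clarkeDir_eq_limsup, hscale, ← (monotone_mul_left_of_nonneg ha.le).map_limsup_of_continuousAt
    (clarkeQuotient f v ∘ m) (continuous_const_mul a).continuousAt (hf.isBoundedUnder_le_clarkeQuotient hm v)
    (hf.isBoundedUnder_ge_clarkeQuotient hm v).isCoboundedUnder_le]
  exact mul_le_mul_of_nonneg_left (hf.limsup_clarkeQuotient_comp_le v hm) ha.le

theorem LocallyLipschitz.clarkeDir_smul (hf : LocallyLipschitz f) (x v : E) {a : ℝ}
    (ha : 0 < a) : clarkeDir f x (a • v) = a * clarkeDir f x v := by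
  refine le_antisymm (hf.clarkeDir_smul_le x v ha) ?_
  have h := hf.clarkeDir_smul_le x (a • v) (inv_pos.2 ha)
  rwa [inv_smul_smul₀ ha.ne', le_inv_mul_iff₀ ha] at h

end ClarkeDir

section ClarkeSubdiff

variable {E : Type*} [NormedAddCommGroup E] [InnerProductSpace ℝ E] [CompleteSpace E]
  {f : E → ℝ}

theorem LocallyLipschitz.exists_mem_clarkeSubdiff_inner_eq (hf : LocallyLipschitz f) (x v : E) :
    ∃ ξ ∈ clarkeSubdiff f x, ⟪ξ, v⟫ = clarkeDir f x v := by
  obtain ⟨g, hg, hgv⟩ := exists_linearMap_le_apply_eq_of_sublinear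
    (fun a ha w => hf.clarkeDir_smul x w ha) (hf.clarkeDir_add_le x) v
  obtain ⟨K, hK⟩ := hf.exists_clarkeDir_le_mul_norm x
  have hbound : ∀ w, ‖g w‖ ≤ K * ‖w‖ := fun w => by
    have h := (hg (-w)).trans (hK (-w))
    rw [map_neg, norm_neg] at h
    exact abs_le.2 ⟨by linarith, (hg w).trans (hK w)⟩
  refine ⟨(InnerProductSpace.toDual ℝ E).symm (g.mkContinuous K hbound), fun w => ?_, ?_⟩
  · rw [InnerProductSpace.toDual_symm_apply, LinearMap.mkContinuous_apply]
    exact hg w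
  · rw [InnerProductSpace.toDual_symm_apply, LinearMap.mkContinuous_apply, hgv]

end ClarkeSubdiff

section Segment

variable {E : Type*} [NormedAddCommGroup E] [InnerProductSpace ℝ E] {f : E → ℝ}

theorem LocallyLipschitz.eventually_slope_lt_of_clarkeDir_lt (hf : LocallyLipschitz f)
    (x₀ v : E) {y r : ℝ} (h : clarkeDir f (x₀ + y • v) v < r) :
    ∀ᶠ z in 𝓝[>] y, slope (fun t => f (x₀ + t • v)) y z < r := by
  set m : ℝ → E × ℝ := fun z => (x₀ + y • v, z - y)
  have hm : Tendsto m (𝓝[>] y) (clarkeFilter (x₀ + y • v)) := by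
    have hsub : Tendsto (· - y) (𝓝[>] y) (𝓝[>] (0 : ℝ)) := by
      have h := (map_add_right_nhdsGT (c := -y) (a := y)).le
      rwa [add_neg_cancel] at h
    exact tendsto_const_nhds.prodMk hsub
  have hslope : slope (fun t => f (x₀ + t • v)) y = clarkeQuotient f v ∘ m := by
    ext z
    simp only [slope_def_field, clarkeQuotient, Function.comp_apply, m, add_assoc, ← add_smul,
      add_sub_cancel]
  rw [hslope]
  exact eventually_lt_of_limsup_lt ((hf.limsup_clarkeQuotient_comp_le v hm).trans_lt h)
    (hf.isBoundedUnder_le_clarkeQuotient hm v)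

theorem LocallyLipschitz.sub_le_mul_of_clarkeDir_le (hf : LocallyLipschitz f) (x₀ v : E)
    {T M : ℝ} (hT : 0 < T) (h : ∀ t ∈ Ioo 0 T, clarkeDir f (x₀ + t • v) v ≤ M) :
    f (x₀ + T • v) - f x₀ ≤ M * T := by
  have hg : ContinuousOn (fun t : ℝ => f (x₀ + t • v)) (Icc 0 T) :=
    (hf.continuous.comp (by fun_prop)).continuousOn
  simpa using sub_le_mul_sub_of_frequently_slope_lt hT hg fun y hy r hr =>
    (hf.eventually_slope_lt_of_clarkeDir_lt x₀ v ((h y hy).trans_lt hr)).frequently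

end Segment

theorem stmt3_general {n : ℕ} (f : EuclideanSpace ℝ (Fin n) → ℝ) (hf : LocallyLipschitz f)
    (x₀ : EuclideanSpace ℝ (Fin n)) (ε c : ℝ) (hε : 0 < ε) (hc : c ∈ Set.Ioo (0:ℝ) 1)
    (W : Set (EuclideanSpace ℝ (Fin n)))
    (vtil : EuclideanSpace ℝ (Fin n))
    (hmem : -vtil ∈ convexHull ℝ W)
    (hmin : ∀ ξ ∈ convexHull ℝ W, ‖-vtil‖ ≤ ‖ξ‖)
    (hne : vtil ≠ 0)
    (hbad : f (x₀ + (ε / ‖vtil‖) • vtil) > f x₀ - c * ε * ‖vtil‖) :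
    ∃ t' ∈ Set.Ioo (0:ℝ) (ε / ‖vtil‖), ∃ ξ' ∈ clarkeSubdiff f (x₀ + t' • vtil),
      ⟪ξ', vtil⟫ > -c * ‖vtil‖^2 ∧ ξ' ∉ convexHull ℝ W := by
  have hv : 0 < ‖vtil‖ := norm_pos_iff.2 hne
  obtain ⟨t', ht', hdir⟩ : ∃ t' ∈ Ioo 0 (ε / ‖vtil‖),
      -c * ‖vtil‖ ^ 2 < clarkeDir f (x₀ + t' • vtil) vtil := by
    by_contra! hle
    have hdrop := hf.sub_le_mul_of_clarkeDir_le x₀ vtil (div_pos hε hv) hle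
    have hrate : -c * ‖vtil‖ ^ 2 * (ε / ‖vtil‖) = -(c * ε * ‖vtil‖) := by
      field_simp
    linarith
  obtain ⟨ξ, hξ, hξv⟩ := hf.exists_mem_clarkeSubdiff_inner_eq (x₀ + t' • vtil) vtil
  refine ⟨t', ht', ξ, hξ, hξv ▸ hdir, fun hξW => ?_⟩
  have hineq := norm_sq_le_inner_of_forall_norm_le (convex_convexHull ℝ W) hmem hmin hξW
  rw [norm_neg, inner_neg_left, real_inner_comm] at hineq
  nlinarith [hc.2, sq_nonneg ‖vtil‖]

theorem stmt3 {n : ℕ} (f : EuclideanSpace ℝ (Fin n) → ℝ) (hf : LocallyLipschitz f)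
    (x₀ : EuclideanSpace ℝ (Fin n)) (ε c : ℝ) (hε : 0 < ε) (hc : c ∈ Set.Ioo (0:ℝ) 1)
    (W : Set (EuclideanSpace ℝ (Fin n))) (hW : W ⊆ goldsteinSubdiff f ε x₀)
    (hWne : W.Nonempty) (hWcomp : IsCompact W)
    (vtil : EuclideanSpace ℝ (Fin n))
    (hmem : -vtil ∈ convexHull ℝ W)
    (hmin : ∀ ξ ∈ convexHull ℝ W, ‖-vtil‖ ≤ ‖ξ‖)
    (hne : vtil ≠ 0)
    (hbad : f (x₀ + (ε / ‖vtil‖) • vtil) > f x₀ - c * ε * ‖vtil‖) :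
    ∃ t' ∈ Set.Ioo (0:ℝ) (ε / ‖vtil‖), ∃ ξ' ∈ clarkeSubdiff f (x₀ + t' • vtil),
      ⟪ξ', vtil⟫ > -c * ‖vtil‖^2 ∧ ξ' ∉ convexHull ℝ W :=
  stmt3_general f hf x₀ ε c hε hc W vtil hmem hmin hne hbad
end

section
/- Let f : ℝⁿ → ℝ be locally Lipschitz, x₀, ṽ ∈ ℝⁿ with ṽ ≠ 0, c̃ ∈ ℝ, and define h_c̃(t) := f(x₀ + t ṽ) - f(x₀) + c̃ t ‖ṽ‖². Suppose the bisection sequences (a_j),(b_j),(t_j) (a₁=0, b₁=ε/‖ṽ‖, h_c̃(a₁) < h_c̃(b₁), bisect preserving h_c̃(a) < h_c̃(b)) converge to t̄. Then liminf_{s↘0} (f(x₀ + t̄ṽ - sṽ) - f(x₀ + t̄ṽ))/s ≤ c̃ ‖ṽ‖². -/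
/-!
Each bisection step keeps `h (a j) < h (b j)` and makes `h (b j)` nondecreasing while the
intervals `[a j, b j]` shrink to `t̄`; by continuity `h (a j) < h (b j) ≤ h t̄`, so in particular
`a j < t̄`. For `s = t̄ - a j` the inequality `h (t̄ - s) < h t̄` says exactly that the difference
quotient `(f (x₀ + t̄ v - s v) - f (x₀ + t̄ v)) / s` is below `c̃ ‖v‖²`, and these `s` tend to `0⁺`.
Local Lipschitz continuity bounds the quotients from below, so their liminf is meaningful.
-/

open Filter Set Topology RealInnerProductSpace

def BisectStep (h : ℝ → ℝ) (a b : ℕ → ℝ) : Prop :=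
  ∀ j, (h (b j) > h ((a j + b j) / 2) →
          a (j + 1) = (a j + b j) / 2 ∧ b (j + 1) = b j) ∧
       (¬ h (b j) > h ((a j + b j) / 2) →
          a (j + 1) = a j ∧ b (j + 1) = (a j + b j) / 2)

namespace BisectStep

variable {h : ℝ → ℝ} {a b : ℕ → ℝ}

theorem succ_cases (hs : BisectStep h a b) (j : ℕ) :
    (a (j + 1) = (a j + b j) / 2 ∧ b (j + 1) = b j ∧ h ((a j + b j) / 2) < h (b j)) ∨
      (a (j + 1) = a j ∧ b (j + 1) = (a j + b j) / 2 ∧ h (b j) ≤ h ((a j + b j) / 2)) := by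
  by_cases hc : h (b j) > h ((a j + b j) / 2)
  · exact Or.inl ⟨((hs j).1 hc).1, ((hs j).1 hc).2, hc⟩
  · exact Or.inr ⟨((hs j).2 hc).1, ((hs j).2 hc).2, not_lt.mp hc⟩

theorem sub_eq_div_pow (hs : BisectStep h a b) (j : ℕ) : b j - a j = (b 0 - a 0) / 2 ^ j := by
  induction j with
  | zero => rw [pow_zero, div_one]
  | succ j ih =>
    rw [pow_succ, ← div_div, ← ih]
    rcases hs.succ_cases j with ⟨ha, hb, -⟩ | ⟨ha, hb, -⟩ <;> rw [ha, hb] <;> ring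

theorem tendsto_sub (hs : BisectStep h a b) : Tendsto (fun j => b j - a j) atTop (𝓝 0) := by
  refine (tendsto_const_nhds.div_atTop (tendsto_pow_atTop_atTop_of_one_lt one_lt_two)).congr
    fun j => (hs.sub_eq_div_pow j).symm

theorem tendsto_left {t : ℝ} (hs : BisectStep h a b)
    (hmid : Tendsto (fun j => (a j + b j) / 2) atTop (𝓝 t)) : Tendsto a atTop (𝓝 t) := by
  simpa using (hmid.sub (hs.tendsto_sub.div_const 2)).congr fun j => by ring

theorem tendsto_right {t : ℝ} (hs : BisectStep h a b)
    (hmid : Tendsto (fun j => (a j + b j) / 2) atTop (𝓝 t)) : Tendsto b atTop (𝓝 t) := by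
  simpa using (hmid.add (hs.tendsto_sub.div_const 2)).congr fun j => by ring

theorem left_le_right (hs : BisectStep h a b) (h0 : a 0 ≤ b 0) (j : ℕ) : a j ≤ b j := by
  have := hs.sub_eq_div_pow j
  have : 0 ≤ (b 0 - a 0) / 2 ^ j := by positivity
  linarith

theorem monotone_left (hs : BisectStep h a b) (h0 : a 0 ≤ b 0) : Monotone a := by
  refine monotone_nat_of_le_succ fun j => ?_
  have := hs.left_le_right h0 j
  rcases hs.succ_cases j with ⟨ha, -, -⟩ | ⟨ha, -, -⟩ <;> linarith

theorem monotone_apply_right (hs : BisectStep h a b) : Monotone (fun j => h (b j)) := by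
  refine monotone_nat_of_le_succ fun j => ?_
  rcases hs.succ_cases j with ⟨-, hb, -⟩ | ⟨-, hb, hle⟩
  · rw [hb]
  · rwa [hb]

theorem apply_left_lt_apply_right (hs : BisectStep h a b) (h0 : h (a 0) < h (b 0)) (j : ℕ) :
    h (a j) < h (b j) := by
  induction j with
  | zero => exact h0
  | succ j ih =>
    rcases hs.succ_cases j with ⟨ha, hb, hlt⟩ | ⟨ha, hb, hle⟩
    · rwa [ha, hb]
    · rw [ha, hb]; exact ih.trans_le hle

theorem apply_left_lt_apply_limit {t : ℝ} (hs : BisectStep h a b) (h0 : h (a 0) < h (b 0))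
    (hc : ContinuousAt h t) (hmid : Tendsto (fun j => (a j + b j) / 2) atTop (𝓝 t)) (j : ℕ) :
    h (a j) < h t :=
  (hs.apply_left_lt_apply_right h0 j).trans_le <|
    hs.monotone_apply_right.ge_of_tendsto (hc.tendsto.comp (hs.tendsto_right hmid)) j

theorem left_lt_limit {t : ℝ} (hs : BisectStep h a b) (hab : a 0 ≤ b 0)
    (h0 : h (a 0) < h (b 0)) (hc : ContinuousAt h t)
    (hmid : Tendsto (fun j => (a j + b j) / 2) atTop (𝓝 t)) (j : ℕ) : a j < t := by
  refine ((hs.monotone_left hab).ge_of_tendsto (hs.tendsto_left hmid) j).lt_of_ne ?_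
  rintro rfl
  exact (hs.apply_left_lt_apply_limit h0 hc hmid j).false

end BisectStep

section Slope

variable {E : Type*} [SeminormedAddCommGroup E] [NormedSpace ℝ E] {f : E → ℝ}

theorem LocallyLipschitz.isBoundedUnder_ge_slope (hf : LocallyLipschitz f) (x v : E) :
    IsBoundedUnder (· ≥ ·) (𝓝[>] (0 : ℝ)) fun s => (f (x + s • v) - f x) / s := by
  obtain ⟨K, t, ht, hK⟩ := hf x
  have hline : Tendsto (fun s : ℝ => x + s • v) (𝓝 0) (𝓝 x) :=
    (by fun_prop : Continuous fun s : ℝ => x + s • v).tendsto' 0 x (by simp)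
  refine isBoundedUnder_of_eventually_ge (a := -(K * ‖v‖)) ?_
  filter_upwards [nhdsWithin_le_nhds (hline ht), self_mem_nhdsWithin] with s hs (hs0 : 0 < s)
  have hlip : |f (x + s • v) - f x| ≤ K * (s * ‖v‖) := by
    simpa [Real.dist_eq, dist_eq_norm, norm_smul, abs_of_pos hs0] using
      hK.dist_le_mul _ hs x (mem_of_mem_nhds ht)
  rw [le_div_iff₀ hs0]
  linarith [(abs_le.mp hlip).1]

theorem liminf_slope_le_of_tendsto (hf : LocallyLipschitz f) {x v : E} {t C : ℝ} {u : ℕ → ℝ}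
    (hu : Tendsto u atTop (𝓝 t)) (hlt : ∀ j, u j < t)
    (hle : ∀ j, f (x + u j • v) + C * u j ≤ f (x + t • v) + C * t) :
    liminf (fun s : ℝ => (f (x + t • v - s • v) - f (x + t • v)) / s) (𝓝[>] 0) ≤ C := by
  have hbdd := hf.isBoundedUnder_ge_slope (x + t • v) (-v)
  simp only [smul_neg, ← sub_eq_add_neg] at hbdd
  refine liminf_le_of_frequently_le ?_ hbdd
  have hgap : Tendsto (fun j => t - u j) atTop (𝓝[>] 0) :=
    tendsto_nhdsWithin_of_tendsto_nhds_of_eventually_within _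
      (by simpa using (tendsto_const_nhds (x := t)).sub hu)
      (Eventually.of_forall fun j => sub_pos.2 (hlt j))
  refine hgap.frequently (Frequently.of_forall fun j => ?_)
  have hpt : x + t • v - (t - u j) • v = x + u j • v := by rw [sub_smul]; abel
  rw [hpt, div_le_iff₀ (sub_pos.2 (hlt j))]
  linarith [hle j]

end Slope

theorem stmt8_general {n : ℕ} (f : EuclideanSpace ℝ (Fin n) → ℝ) (hf : LocallyLipschitz f)
    (x₀ vtil : EuclideanSpace ℝ (Fin n)) (ctil ε : ℝ) (hε : 0 < ε)
    (a b : ℕ → ℝ) (ha0 : a 0 = 0) (hb0 : b 0 = ε / ‖vtil‖)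
    (hinit : (fun t => f (x₀ + t • vtil) - f x₀ + ctil * t * ‖vtil‖^2) (a 0)
           < (fun t => f (x₀ + t • vtil) - f x₀ + ctil * t * ‖vtil‖^2) (b 0))
    (hstep : BisectStep (fun t => f (x₀ + t • vtil) - f x₀ + ctil * t * ‖vtil‖^2) a b)
    (tbar : ℝ) (hlim : Tendsto (fun j => (a j + b j) / 2) atTop (𝓝 tbar)) :
    Filter.liminf
      (fun s : ℝ => (f (x₀ + tbar • vtil - s • vtil) - f (x₀ + tbar • vtil)) / s)
      (nhdsWithin 0 (Set.Ioi 0)) ≤ ctil * ‖vtil‖^2 := by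
  have hcont : Continuous fun t : ℝ => f (x₀ + t • vtil) - f x₀ + ctil * t * ‖vtil‖ ^ 2 := by
    have := hf.continuous
    fun_prop
  have hab : a 0 ≤ b 0 := by rw [ha0, hb0]; exact div_nonneg hε.le (norm_nonneg _)
  refine liminf_slope_le_of_tendsto hf (hstep.tendsto_left hlim)
    (hstep.left_lt_limit hab hinit hcont.continuousAt hlim) fun j => ?_
  have := hstep.apply_left_lt_apply_limit hinit hcont.continuousAt hlim j
  linarith

theorem stmt8 {n : ℕ} (f : EuclideanSpace ℝ (Fin n) → ℝ) (hf : LocallyLipschitz f)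
    (x₀ vtil : EuclideanSpace ℝ (Fin n)) (hv : vtil ≠ 0) (ctil ε : ℝ) (hε : 0 < ε)
    (a b : ℕ → ℝ) (ha0 : a 0 = 0) (hb0 : b 0 = ε / ‖vtil‖)
    (hinit : (fun t => f (x₀ + t • vtil) - f x₀ + ctil * t * ‖vtil‖^2) (a 0)
           < (fun t => f (x₀ + t • vtil) - f x₀ + ctil * t * ‖vtil‖^2) (b 0))
    (hstep : BisectStep (fun t => f (x₀ + t • vtil) - f x₀ + ctil * t * ‖vtil‖^2) a b)
    (tbar : ℝ) (hlim : Tendsto (fun j => (a j + b j) / 2) atTop (𝓝 tbar)) :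
    Filter.liminf
      (fun s : ℝ => (f (x₀ + tbar • vtil - s • vtil) - f (x₀ + tbar • vtil)) / s)
      (nhdsWithin 0 (Set.Ioi 0)) ≤ ctil * ‖vtil‖^2 :=
  stmt8_general f hf x₀ vtil ctil ε hε a b ha0 hb0 hinit hstep tbar hlim
end
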